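/- Fix integers N, m ≥ 1 and a weakly monotone surjection b : Fin N → Fin m. For every N×N lower block-unitriangular matrix H over A = ℤ[q,q⁻¹] there exist an N×N lower block-unitriangular matrix P over A with every entry outside the diagonal blocks lying in qℤ[q], and an N×N lower block-unitriangular matrix Q over A with every entry bar-invariant, such that H = P·Q. -/

import Mathlib

open LaurentPolynomial

/-- `M` is lower block-unitriangular with respect to the block function `b`. -/
def LowerBlockUnitriangular {R : Type*} [CommRing R] {N m : ℕ} (b : Fin N → Fin m)
    (M : Matrix (Fin N) (Fin N) R) : Prop :=
  (∀ i j, b i = b j → M i j = if i = j then (1 : R) else 0) ∧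
  ∀ i j, b i < b j → M i j = 0

/-- `f` lies in `qℤ[q]`: a polynomial in `q` with zero constant term,
i.e. all coefficients in degrees `≤ 0` vanish. -/
def MemqZq (f : LaurentPolynomial ℤ) : Prop := ∀ n : ℤ, n ≤ 0 → f.coeff n = 0

/-- `f` is invariant under the bar involution `q ↦ q⁻¹`. -/
def BarInvariant (f : LaurentPolynomial ℤ) : Prop := invert f = f

/-!
Every Laurent polynomial splits as `f = p + r` with `p ∈ qℤ[q]` and `r` bar-invariant: take for `p`
the positive-degree part of `f - f̄`. The factorization `H = P * Q` is then built one block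
subdiagonal at a time. If `H - P * Q` vanishes at block distance `≤ n`, split its entries at
distance `n + 1` in this way as `X + Y` and pass to `P + X`, `Q + Y`. Because `P` and `Q` are the
identity on the diagonal blocks, `(P + X) * (Q + Y)` differs from `P * Q + X + Y` only at block
distance `> n + 1`.
-/

section BlockMatrices

variable {R : Type*} [CommRing R] {N m : ℕ} (b : Fin N → Fin m)

def BlockDepthAtLeast (n : ℕ) (M : Matrix (Fin N) (Fin N) R) : Prop :=
  ∀ i j, (b i : ℕ) < b j + n → M i j = 0

variable {b}

namespace BlockDepthAtLeast

variable {n n' : ℕ} {M X Y : Matrix (Fin N) (Fin N) R}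

theorem mono (hM : BlockDepthAtLeast b n M) (hn : n' ≤ n) : BlockDepthAtLeast b n' M :=
  fun i j h => hM i j (by omega)

theorem add (hX : BlockDepthAtLeast b n X) (hY : BlockDepthAtLeast b n Y) :
    BlockDepthAtLeast b n (X + Y) := fun i j h => by
  rw [Matrix.add_apply, hX i j h, hY i j h, add_zero]

theorem neg (hM : BlockDepthAtLeast b n M) : BlockDepthAtLeast b n (-M) := fun i j h => by
  rw [Matrix.neg_apply, hM i j h, neg_zero]

theorem mul (hX : BlockDepthAtLeast b n X) (hY : BlockDepthAtLeast b n' Y) :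
    BlockDepthAtLeast b (n + n') (X * Y) := fun i j h => by
  rw [Matrix.mul_apply]
  refine Finset.sum_eq_zero fun k _ => ?_
  by_cases hk : (b i : ℕ) < b k + n
  · rw [hX i k hk, zero_mul]
  · rw [hY k j (by omega), mul_zero]

theorem eq_zero (hM : BlockDepthAtLeast b n M) (hn : m ≤ n) : M = 0 := by
  ext i j
  exact hM i j (by have := (b i).isLt; omega)

theorem exists_add_eq {S T : AddSubmonoid R} (hST : S ⊔ T = ⊤) (hM : BlockDepthAtLeast b n M) :
    ∃ X Y : Matrix (Fin N) (Fin N) R, BlockDepthAtLeast b n X ∧ BlockDepthAtLeast b n Y ∧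
      (∀ i j, X i j ∈ S) ∧ (∀ i j, Y i j ∈ T) ∧ X + Y = M := by
  have hsplit (x : R) : ∃ s ∈ S, ∃ t ∈ T, s + t = x :=
    AddSubmonoid.mem_sup.mp (hST ▸ AddSubmonoid.mem_top x)
  choose s hs t ht hst using hsplit
  let mask (f : R → R) : Matrix (Fin N) (Fin N) R :=
    Matrix.of fun i j => if (b j : ℕ) + n ≤ b i then f (M i j) else 0
  have mask_depth (f : R → R) : BlockDepthAtLeast b n (mask f) := fun i j h => by
    simp only [mask, Matrix.of_apply, if_neg (show ¬((b j : ℕ) + n ≤ b i) by omega)]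
  refine ⟨mask s, mask t, mask_depth s, mask_depth t, fun i j => ?_, fun i j => ?_, ?_⟩
  · simp only [mask, Matrix.of_apply]
    split_ifs
    exacts [hs _, zero_mem S]
  · simp only [mask, Matrix.of_apply]
    split_ifs
    exacts [ht _, zero_mem T]
  · ext i j
    simp only [mask, Matrix.add_apply, Matrix.of_apply]
    split_ifs with h
    · exact hst _
    · rw [add_zero, hM i j (by omega)]

end BlockDepthAtLeast

namespace LowerBlockUnitriangular

variable {n : ℕ} {A X : Matrix (Fin N) (Fin N) R}

theorem one : LowerBlockUnitriangular b (1 : Matrix (Fin N) (Fin N) R) :=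
  ⟨fun i j _ => Matrix.one_apply, fun i j h => Matrix.one_apply_ne (by rintro rfl; exact h.false)⟩

theorem apply_self (hA : LowerBlockUnitriangular b A) (i : Fin N) : A i i = 1 := by
  rw [hA.1 i i rfl, if_pos rfl]

theorem apply_eq_zero (hA : LowerBlockUnitriangular b A) {i k : Fin N} (hik : i ≠ k)
    (h : (b i : ℕ) ≤ b k) : A i k = 0 := by
  rcases (Fin.le_iff_val_le_val.mpr h).eq_or_lt with h | h
  · rw [hA.1 i k h, if_neg hik]
  · exact hA.2 i k h

theorem add_of_blockDepth (hA : LowerBlockUnitriangular b A) (hX : BlockDepthAtLeast b 1 X) :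
    LowerBlockUnitriangular b (A + X) := by
  refine ⟨fun i j h => ?_, fun i j h => ?_⟩
  · rw [Matrix.add_apply, hX i j (by rw [h]; omega), add_zero, hA.1 i j h]
  · rw [Matrix.add_apply, hX i j (by have : (b i : ℕ) < b j := h; omega), add_zero, hA.2 i j h]

theorem blockDepth_sub_one (hA : LowerBlockUnitriangular b A) : BlockDepthAtLeast b 1 (A - 1) :=
  fun i j h => by
    by_cases hij : i = j
    · rw [hij, Matrix.sub_apply, hA.apply_self, Matrix.one_apply_eq, sub_self]
    · rw [Matrix.sub_apply, hA.apply_eq_zero hij (by omega), Matrix.one_apply_ne hij, sub_self]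

theorem blockDepth_mul_left_sub (hA : LowerBlockUnitriangular b A) (hX : BlockDepthAtLeast b n X) :
    BlockDepthAtLeast b (n + 1) (A * X - X) := fun i j h => by
  rw [Matrix.sub_apply, Matrix.mul_apply, Finset.sum_eq_single i, hA.apply_self, one_mul, sub_self]
  · intro k _ hki
    by_cases hk : (b k : ℕ) < b j + n
    · rw [hX k j hk, mul_zero]
    · rw [hA.apply_eq_zero (Ne.symm hki) (by omega), zero_mul]
  · simp

theorem blockDepth_mul_right_sub (hA : LowerBlockUnitriangular b A) (hX : BlockDepthAtLeast b n X) :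
    BlockDepthAtLeast b (n + 1) (X * A - X) := fun i j h => by
  rw [Matrix.sub_apply, Matrix.mul_apply, Finset.sum_eq_single j, hA.apply_self, mul_one, sub_self]
  · intro k _ hkj
    by_cases hk : (b i : ℕ) < b k + n
    · rw [hX i k hk, zero_mul]
    · rw [hA.apply_eq_zero hkj (by omega), mul_zero]
  · simp

theorem exists_eq_mul {S T : AddSubmonoid R} (hST : S ⊔ T = ⊤) (hT : 1 ∈ T)
    {H : Matrix (Fin N) (Fin N) R} (hH : LowerBlockUnitriangular b H) :
    ∃ P Q : Matrix (Fin N) (Fin N) R,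
      LowerBlockUnitriangular b P ∧ (∀ i j, b i ≠ b j → P i j ∈ S) ∧
      LowerBlockUnitriangular b Q ∧ (∀ i j, Q i j ∈ T) ∧ H = P * Q := by
  have approx (n : ℕ) : ∃ P Q : Matrix (Fin N) (Fin N) R,
      LowerBlockUnitriangular b P ∧ (∀ i j, b i ≠ b j → P i j ∈ S) ∧
      LowerBlockUnitriangular b Q ∧ (∀ i j, Q i j ∈ T) ∧
      BlockDepthAtLeast b (n + 1) (H - P * Q) := by
    induction n with
    | zero =>
      refine ⟨1, 1, .one, fun i j h => ?_, .one, fun i j => ?_,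
        by simpa using hH.blockDepth_sub_one⟩
      · rw [Matrix.one_apply_ne (by rintro rfl; exact h rfl)]
        exact zero_mem S
      · rw [Matrix.one_apply]
        split_ifs
        exacts [hT, zero_mem T]
    | succ n ih =>
      obtain ⟨P, Q, hP, hPS, hQ, hQT, hPQ⟩ := ih
      obtain ⟨X, Y, hX, hY, hXS, hYT, hXY⟩ := hPQ.exists_add_eq hST
      have hexpand : H - (P + X) * (Q + Y) = -((X * Q - X) + (P * Y - Y) + X * Y) := by
        rw [show H - (P + X) * (Q + Y) = (H - P * Q - (X + Y)) - ((X * Q - X) + (P * Y - Y) + X * Y)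
          by noncomm_ring, hXY, sub_self, zero_sub]
      refine ⟨P + X, Q + Y, hP.add_of_blockDepth (hX.mono (by omega)),
        fun i j h => add_mem (hPS i j h) (hXS i j), hQ.add_of_blockDepth (hY.mono (by omega)),
        fun i j => add_mem (hQT i j) (hYT i j), ?_⟩
      rw [hexpand]
      exact (((hQ.blockDepth_mul_right_sub hX).add (hP.blockDepth_mul_left_sub hY)).add
        ((hX.mul hY).mono (by omega))).neg
  obtain ⟨P, Q, hP, hPS, hQ, hQT, hPQ⟩ := approx m
  exact ⟨P, Q, hP, hPS, hQ, hQT, sub_eq_zero.mp (hPQ.eq_zero (by omega))⟩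

end LowerBlockUnitriangular

end BlockMatrices

noncomputable def LaurentPolynomial.posDegreePart {R : Type*} [Semiring R] (f : R[T;T⁻¹]) :
    R[T;T⁻¹] :=
  AddMonoidAlgebra.ofCoeff (f.coeff.filter (0 < ·))

theorem LaurentPolynomial.coeff_posDegreePart {R : Type*} [Semiring R] (f : R[T;T⁻¹]) (n : ℤ) :
    (posDegreePart f).coeff n = if 0 < n then f.coeff n else 0 :=
  Finsupp.filter_apply _ _ _

def qZq : AddSubmonoid (LaurentPolynomial ℤ) where
  carrier := {f | MemqZq f}
  zero_mem' := fun _ _ => rfl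
  add_mem' := fun hf hg n hn => by
    rw [AddMonoidAlgebra.coeff_add, Finsupp.add_apply, hf n hn, hg n hn, add_zero]

def barInvariants : AddSubmonoid (LaurentPolynomial ℤ) where
  carrier := {f | BarInvariant f}
  zero_mem' := map_zero invert
  add_mem' := fun {f g} hf hg => show invert (f + g) = f + g by rw [map_add, hf, hg]

theorem one_mem_barInvariants : 1 ∈ barInvariants := map_one invert

theorem posDegreePart_mem_qZq (f : LaurentPolynomial ℤ) : posDegreePart f ∈ qZq := fun n hn => by
  rw [coeff_posDegreePart, if_neg (by omega)]

-- For `n > 0` the coefficients of `f - posDegreePart (f - f̄)` in degrees `n` and `-n`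
-- are both `f₋ₙ`.
theorem sub_posDegreePart_sub_invert_mem_barInvariants (f : LaurentPolynomial ℤ) :
    f - posDegreePart (f - invert f) ∈ barInvariants := by
  show invert _ = _
  ext n
  simp only [invert_apply, AddMonoidAlgebra.coeff_sub, Finsupp.sub_apply, coeff_posDegreePart,
    neg_neg]
  split_ifs with h₁ h₂ h₂
  · omega
  · ring
  · ring
  · rw [show n = 0 by omega, neg_zero, sub_zero]

theorem qZq_sup_barInvariants : qZq ⊔ barInvariants = ⊤ := by
  refine eq_top_iff.mpr fun f _ => AddSubmonoid.mem_sup.mpr ?_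
  exact ⟨_, posDegreePart_mem_qZq (f - invert f), _,
    sub_posDegreePart_sub_invert_mem_barInvariants f, add_sub_cancel _ _⟩

theorem stmt4_general (N m : ℕ) (b : Fin N → Fin m)
    (H : Matrix (Fin N) (Fin N) (LaurentPolynomial ℤ))
    (hH : LowerBlockUnitriangular b H) :
    ∃ P Q : Matrix (Fin N) (Fin N) (LaurentPolynomial ℤ),
      LowerBlockUnitriangular b P ∧ (∀ i j, b i ≠ b j → MemqZq (P i j)) ∧
      LowerBlockUnitriangular b Q ∧ (∀ i j, BarInvariant (Q i j)) ∧
      H = P * Q :=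
  hH.exists_eq_mul qZq_sup_barInvariants one_mem_barInvariants

theorem stmt4 (N m : ℕ) (hN : 1 ≤ N) (hm : 1 ≤ m) (b : Fin N → Fin m)
    (hmono : Monotone b) (hsurj : Function.Surjective b)
    (H : Matrix (Fin N) (Fin N) (LaurentPolynomial ℤ))
    (hH : LowerBlockUnitriangular b H) :
    ∃ P Q : Matrix (Fin N) (Fin N) (LaurentPolynomial ℤ),
      LowerBlockUnitriangular b P ∧ (∀ i j, b i ≠ b j → MemqZq (P i j)) ∧
      LowerBlockUnitriangular b Q ∧ (∀ i j, BarInvariant (Q i j)) ∧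
      H = P * Q :=
  stmt4_general N m b H hH
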